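/- Let (Γ₁, Γ₂, τ) be a Belavin–Drinfeld triple and X = {(α,β) : α ≺ β}. There exists a total order < on X such that J = Π^<_{(α,β)∈X} (1 + sign(α,β)(q−q⁻¹) q^{K_{α,β}} e_β ⊗ e_{−α}) and J⁻¹ = Π^>_{(α,β)∈X} (1 − sign(α,β)(q−q⁻¹) q^{K_{α,β}} e_β ⊗ e_{−α}), where Π^< (resp. Π^>) denotes the product taken left to right in increasing (resp. decreasing) order of <, and where the order refines the grading by the power of τ: if τⁱα = β and τʲα' = β' with i < j then (α,β) < (α',β'). -/

import Mathlib

namespace GGS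

open Finset
open scoped Classical

noncomputable section

/-- `n × n` complex matrices, `Mat_n(ℂ)`. -/
abbrev MatN (n : ℕ) := Matrix (Fin n) (Fin n) ℂ
/-- `Mat_n(ℂ) ⊗ Mat_n(ℂ)`, realized as matrices indexed by pairs. -/
abbrev MatT (n : ℕ) := Matrix (Fin n × Fin n) (Fin n × Fin n) ℂ
/-- `Mat_n(ℂ)^{⊗3}`. -/
abbrev MatT3 (n : ℕ) := Matrix (Fin n × Fin n × Fin n) (Fin n × Fin n × Fin n) ℂ

/-- Matrix unit `E_{ij}` (ℕ-indices; `0` if out of range). -/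
def E (n i j : ℕ) : MatN n := fun a b => if (a : ℕ) = i ∧ (b : ℕ) = j then 1 else 0

/-- Tensor (Kronecker) product of two `n × n` matrices. -/
def tens {n : ℕ} (A B : MatN n) : MatT n := fun p q => A p.1 q.1 * B p.2 q.2

/-- `M₂₁` : swap of the two tensor factors. -/
def swap21 {n : ℕ} (M : MatT n) : MatT n := fun p q => M (p.2, p.1) (q.2, q.1)

/-- The permutation (Casimir) element `P = Σ E_{ij} ⊗ E_{ji}`. -/
def Pm (n : ℕ) : MatT n := ∑ i ∈ range n, ∑ j ∈ range n, tens (E n i j) (E n j i)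

/-- `P⁰ = Σ E_{ii} ⊗ E_{ii}`. -/
def P0 (n : ℕ) : MatT n := ∑ i ∈ range n, tens (E n i i) (E n i i)

/-- `M₁₂ = M ⊗ 1`. -/
def lift12 {n : ℕ} (M : MatT n) : MatT3 n :=
  fun p q => M (p.1, p.2.1) (q.1, q.2.1) * (if p.2.2 = q.2.2 then 1 else 0)

/-- `M₁₃`. -/
def lift13 {n : ℕ} (M : MatT n) : MatT3 n :=
  fun p q => M (p.1, p.2.2) (q.1, q.2.2) * (if p.2.1 = q.2.1 then 1 else 0)

/-- `M₂₃ = 1 ⊗ M`. -/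
def lift23 {n : ℕ} (M : MatT n) : MatT3 n :=
  fun p q => M (p.2.1, p.2.2) (q.2.1, q.2.2) * (if p.1 = q.1 then 1 else 0)

/-- The quantum Yang–Baxter equation `R₁₂R₁₃R₂₃ = R₂₃R₁₃R₁₂`. -/
def QYBE {n : ℕ} (M : MatT n) : Prop :=
  lift12 M * lift13 M * lift23 M = lift23 M * lift13 M * lift12 M

/-- The Hecke relation `(PR − q)(PR + q⁻¹) = 0`. -/
def Hecke {n : ℕ} (q : ℝ) (M : MatT n) : Prop :=
  (Pm n * M - (q : ℂ) • (1 : MatT n)) * (Pm n * M + (q : ℂ)⁻¹ • (1 : MatT n)) = 0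

/-- Standard basis vector `e_i` of `ℂⁿ` (as a function on indices). -/
def evec (i : ℕ) : ℕ → ℂ := fun k => if k = i then 1 else 0
/-- The root vector `e_i − e_j`. -/
def rvec (i j : ℕ) : ℕ → ℂ := evec i - evec j
/-- The simple root `α_i = e_i − e_{i+1}` (0-based indexing). -/
def svec (i : ℕ) : ℕ → ℂ := rvec i (i + 1)
/-- The inner product on `ℂⁿ` for which `(e_i)` is orthonormal (restricted to real vectors). -/
def ipn (n : ℕ) (x y : ℕ → ℂ) : ℂ := ∑ k ∈ range n, x k * y k

/-- A Belavin–Drinfeld triple of type `A_{n−1}`; simple roots are indexed `0,…,n−2`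
(0-based: index `i` stands for `α_i = e_i − e_{i+1}`). -/
structure BDTriple (n : ℕ) where
  Γ1 : Finset ℕ
  Γ2 : Finset ℕ
  τ : ℕ → ℕ
  mem1 : ∀ i ∈ Γ1, i + 1 < n
  mem2 : ∀ i ∈ Γ2, i + 1 < n
  bij : Set.BijOn τ ↑Γ1 ↑Γ2
  isometry : ∀ i ∈ Γ1, ∀ j ∈ Γ1, ipn n (svec (τ i)) (svec (τ j)) = ipn n (svec i) (svec j)
  nilp : ∀ i ∈ Γ1, ∃ k ≥ 1, τ^[k] i ∉ Γ1

variable {n : ℕ}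

/-- The positive root `e_i − e_j` (`i < j`) lies in `Γ̃₁` (the positive part of `Span Γ₁`). -/
def SpanRoot (T : BDTriple n) (i j : ℕ) : Prop :=
  i < j ∧ ∀ k, i ≤ k → k < j → k ∈ T.Γ1

/-- `q = τ(p)` for positive roots, via the additive extension of `τ` to `Γ̃₁`. -/
def tauStep (T : BDTriple n) (p q : ℕ × ℕ) : Prop :=
  SpanRoot T p.1 p.2 ∧ q.1 < q.2 ∧ rvec q.1 q.2 = ∑ k ∈ Finset.Ico p.1 p.2, svec (T.τ k)

/-- `q = τᵏ(p)`. -/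
def precK (T : BDTriple n) : ℕ → ℕ × ℕ → ℕ × ℕ → Prop
  | 0, p, q => p = q
  | k + 1, p, q => ∃ r, tauStep T p r ∧ precK T k r q

/-- `p ≺ q`, i.e. `q = τᵏ p` for some `k ≥ 1`. -/
def prec (T : BDTriple n) (p q : ℕ × ℕ) : Prop := ∃ k, precK T (k + 1) p q

/-- `p ≺← q` : `q = τᵏ p` and `τᵏ` reverses orientation on `p`. -/
def RevOri (T : BDTriple n) (p q : ℕ × ℕ) : Prop :=
  ∃ k, precK T (k + 1) p q ∧ T.τ^[k + 1] p.1 = q.2 - 1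

/-- `p ≺→ q` : `q = τᵏ p` and `τᵏ` preserves orientation on `p`. -/
def PresOri (T : BDTriple n) (p q : ℕ × ℕ) : Prop :=
  ∃ k, precK T (k + 1) p q ∧ T.τ^[k + 1] p.1 = q.1

/-- `sign(α,β)` : `(−1)^{1−|α|}` in the orientation-reversing case, `1` otherwise. -/
def sgn (T : BDTriple n) (p q : ℕ × ℕ) : ℂ :=
  if RevOri T p q then (-1 : ℂ) ^ (p.2 - p.1 - 1) else 1

/-- Sum over all pairs of (would-be) positive roots with indices `< n`. -/
def sumRoots (n : ℕ) (f : ℕ × ℕ → ℕ × ℕ → MatT n) : MatT n :=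
  ∑ i ∈ range n, ∑ j ∈ range n, ∑ k ∈ range n, ∑ l ∈ range n, f (i, j) (k, l)

/-- `a = Σ_{α≺β} sign(α,β) (e_{−α} ⊗ e_β − e_β ⊗ e_{−α})`. -/
def aMat (T : BDTriple n) : MatT n :=
  sumRoots n fun p q =>
    if prec T p q then
      sgn T p q • (tens (E n p.2 p.1) (E n q.1 q.2) - tens (E n q.1 q.2) (E n p.2 p.1))
    else 0

/-- `r_s = ½ P⁰ + Σ_{α>0} e_{−α} ⊗ e_α`. -/
def rsMat (n : ℕ) : MatT n :=
  (1 / 2 : ℂ) • P0 n +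
    ∑ i ∈ range n, ∑ j ∈ range n, if i < j then tens (E n j i) (E n i j) else 0

/-- `ε = a r_s + r_s a + a²`. -/
def epsMat (T : BDTriple n) : MatT n :=
  aMat T * rsMat n + rsMat n * aMat T + aMat T * aMat T

/-- Entry of a tensor-square matrix, with ℕ indices. -/
def entry (M : MatT n) (a b c d : ℕ) : ℂ :=
  if h : a < n ∧ b < n ∧ c < n ∧ d < n then
    M (⟨a, h.1⟩, ⟨b, h.2.1⟩) (⟨c, h.2.2.1⟩, ⟨d, h.2.2.2⟩)
  else 0

/-- The coefficient of `e_β ⊗ e_{−α}` in `M` (here `p = α`, `q = β`). -/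
def coeffBA (M : MatT n) (p q : ℕ × ℕ) : ℂ := entry M q.1 p.2 q.2 p.1

/-- `q^z = exp(z · ln q)`. -/
def qpow (q : ℝ) (z : ℂ) : ℂ := Complex.exp (z * (Real.log q : ℂ))

/-- The coefficients `K_{α,β}`. -/
def Kc (T : BDTriple n) (p q : ℕ × ℕ) : ℂ :=
  (if p.2 = q.1 then (1 / 2 : ℂ) else 0) - (if q.2 = p.1 then (1 / 2 : ℂ) else 0)
    + (if ∃ g : ℕ × ℕ, prec T p g ∧ prec T g q ∧ p.2 = g.1 then 1 else 0)
    - (if ∃ g : ℕ × ℕ, prec T p g ∧ prec T g q ∧ g.2 = p.1 then 1 else 0)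
    + (if RevOri T p q then 1 - ((p.2 - p.1 : ℕ) : ℂ) else 0)

/-- `Jⁱ = 1 + (q − q⁻¹) Σ_{β = τⁱα} sign(α,β) q^{K_{α,β}} e_β ⊗ e_{−α}`. -/
def Jlevel (q : ℝ) (T : BDTriple n) (i : ℕ) : MatT n :=
  1 + sumRoots n fun p r =>
    if precK T i p r then
      (((q : ℂ) - (q : ℂ)⁻¹) * sgn T p r * qpow q (Kc T p r)) • tens (E n r.1 r.2) (E n p.2 p.1)
    else 0

/-- `J = J¹ J² ⋯` (levels beyond the maximal power of `τ` contribute the identity). -/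
def Jmat (q : ℝ) (T : BDTriple n) : MatT n :=
  ((List.range n).map fun i => Jlevel q T (i + 1)).prod

/-- The standard Drinfeld–Jimbo `R`-matrix `R_s`. -/
def RsQ (n : ℕ) (q : ℝ) : MatT n :=
  (q : ℂ) • P0 n
    + (∑ i ∈ range n, ∑ j ∈ range n, if i ≠ j then tens (E n i i) (E n j j) else 0)
    + ((q : ℂ) - (q : ℂ)⁻¹) •
        (∑ i ∈ range n, ∑ j ∈ range n, if j < i then tens (E n i j) (E n j i) else 0)

/-- `e_{−α} ∧_c e_β = q^{−c} e_{−α} ⊗ e_β − q^c e_β ⊗ e_{−α}` (`p = α`, `r = β`). -/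
def wedgeC {n : ℕ} (q : ℝ) (c : ℂ) (p r : ℕ × ℕ) : MatT n :=
  qpow q (-c) • tens (E n p.2 p.1) (E n r.1 r.2) - qpow q c • tens (E n r.1 r.2) (E n p.2 p.1)

/-- `R̄_GGS = R_s + (q−q⁻¹) Σ_{α≺β} sign(α,β) e_{−α} ∧_{−sign(α,β) ε_{α,β}} e_β`. -/
def RbarGGS (q : ℝ) (T : BDTriple n) : MatT n :=
  RsQ n q + ((q : ℂ) - (q : ℂ)⁻¹) •
    sumRoots n fun p r =>
      if prec T p r then
        sgn T p r • wedgeC q (-(sgn T p r) * coeffBA (epsMat T) p r) p r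
      else 0

/-- `R̄_J = J⁻¹ R_s J₂₁`. -/
def RbarJ (q : ℝ) (T : BDTriple n) : MatT n :=
  (Jmat q T)⁻¹ * RsQ n q * swap21 (Jmat q T)

/-- `q^{r⁰}` for a diagonal⊗diagonal `r⁰`. -/
def qr0 (n : ℕ) (q : ℝ) (r0 : ℕ → ℕ → ℂ) : MatT n :=
  ∑ i ∈ range n, ∑ j ∈ range n, qpow q (r0 i j) • tens (E n i i) (E n j j)

/-- `R_GGS = q^{r⁰} R̄_GGS q^{r⁰}`. -/
def RGGS (q : ℝ) (T : BDTriple n) (r0 : ℕ → ℕ → ℂ) : MatT n :=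
  qr0 n q r0 * RbarGGS q T * qr0 n q r0

/-- `R_J = q^{r⁰} R̄_J q^{r⁰}`. -/
def RJ (q : ℝ) (T : BDTriple n) (r0 : ℕ → ℕ → ℂ) : MatT n :=
  qr0 n q r0 * RbarJ q T * qr0 n q r0

/-- `r⁰ ∈ 𝔥 ∧ 𝔥`, i.e. the coefficient matrix is antisymmetric. -/
def Antisym (n : ℕ) (r0 : ℕ → ℕ → ℂ) : Prop := ∀ i < n, ∀ j < n, r0 i j = -r0 j i

/-- The Belavin–Drinfeld compatibility equations
`((α − τα) ⊗ 1) r⁰ = ½ ((α + τα) ⊗ 1) P⁰` for all `α ∈ Γ₁`, written componentwise. -/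
def Compat (T : BDTriple n) (r0 : ℕ → ℕ → ℂ) : Prop :=
  ∀ s ∈ T.Γ1, ∀ j < n,
    r0 s j - r0 (s + 1) j - r0 (T.τ s) j + r0 (T.τ s + 1) j
      = (1 / 2 : ℂ) *
        ((if j = s then 1 else 0) - (if j = s + 1 then 1 else 0)
          + (if j = T.τ s then 1 else 0) - (if j = T.τ s + 1 then 1 else 0))

/-- `a₊ⁱ` : the part of `a₊` supported on pairs with `β = τⁱα`. -/
def aPlusLev (T : BDTriple n) (i : ℕ) : MatT n :=
  sumRoots n fun p r =>
    if precK T i p r then (-(sgn T p r)) • tens (E n r.1 r.2) (E n p.2 p.1) else 0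

/-- `a₊ = Σ_{α≺β} (−sign(α,β)) e_β ⊗ e_{−α}`. -/
def aPlus (T : BDTriple n) : MatT n :=
  sumRoots n fun p r =>
    if prec T p r then (-(sgn T p r)) • tens (E n r.1 r.2) (E n p.2 p.1) else 0

/-- `a₋ = Σ_{α≺β} sign(α,β) e_{−α} ⊗ e_β`. -/
def aMinus (T : BDTriple n) : MatT n :=
  sumRoots n fun p r =>
    if prec T p r then sgn T p r • tens (E n p.2 p.1) (E n r.1 r.2) else 0

/-- `P₊ = Σ_{i<j} E_{ij}⊗E_{ji} + ½P⁰`. -/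
def PPlus (n : ℕ) : MatT n :=
  (∑ i ∈ range n, ∑ j ∈ range n, if i < j then tens (E n i j) (E n j i) else 0)
    + (1 / 2 : ℂ) • P0 n

/-- `P₋ = Σ_{i>j} E_{ij}⊗E_{ji} + ½P⁰`. -/
def PMinus (n : ℕ) : MatT n :=
  (∑ i ∈ range n, ∑ j ∈ range n, if j < i then tens (E n i j) (E n j i) else 0)
    + (1 / 2 : ℂ) • P0 n

/-- The matrix `Σ_{i≥j} a₊ⁱa₊ʲ − Σ_{i<j} a₊ⁱa₊ʲ + a₊P₋ + a₋P₊ + P₊a₊ + a₊a₋ − a₋a₊`. -/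
def Mmat (T : BDTriple n) : MatT n :=
  (∑ i ∈ range n, ∑ j ∈ range n, if j ≤ i then aPlusLev T (i + 1) * aPlusLev T (j + 1) else 0)
    - (∑ i ∈ range n, ∑ j ∈ range n, if i < j then aPlusLev T (i + 1) * aPlusLev T (j + 1) else 0)
    + aPlus T * PMinus n + aMinus T * PPlus n + PPlus n * aPlus T
    + aPlus T * aMinus T - aMinus T * aPlus T

/-- `L_{α,β}` : `½` if `α ⋖ β`, `−½` if `α ⋗ β`, `0` otherwise. -/
def Lc (p r : ℕ × ℕ) : ℂ :=
  if p.2 = r.1 then 1 / 2 else if r.2 = p.1 then -(1 / 2) else 0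

/-- The part of `M` (viewed on the basis `e_{τα} ⊗ e_{−α}`, `α ∈ Γ̃₁`) supported on
pairs with `α ⋗ τα`. -/
def partGtr (T : BDTriple n) (M : MatT n) : MatT n :=
  sumRoots n fun p r =>
    if tauStep T p r ∧ r.2 = p.1 then coeffBA M p r • tens (E n r.1 r.2) (E n p.2 p.1) else 0

/-- The part of `M` (viewed on the basis `e_{−α} ⊗ e_{τα}`, `α ∈ Γ̃₁`) supported on
pairs with `α ⋖ τα`. -/
def partLess21 (T : BDTriple n) (M : MatT n) : MatT n :=
  sumRoots n fun p r =>
    if tauStep T p r ∧ p.2 = r.1 then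
      entry M p.2 r.1 p.1 r.2 • tens (E n p.2 p.1) (E n r.1 r.2)
    else 0

/-!
Write `X_{(α,β)} = e_β ⊗ e_{−α}`, so that `Jⁱ = 1 + Σ_{β = τⁱα} c_{α,β} X_{(α,β)}`. Since
`X_{(α,β)} X_{(α',β')}` contains the factor `e_{−α} e_{−α'}`, it vanishes unless `α'` ends where
`α` starts; hence if the pairs of a level are listed by increasing left end of `α`, every product
of an earlier `X` with a later one vanishes and `Jⁱ` is the ordered product of its factors
`1 + c X`. In particular `X² = 0`, so each factor is inverted by `1 − c X`, which gives `J⁻¹`.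

Concatenating the levels lists every pair `α ≺ β` exactly once. Indeed `τ` maps the simple
roots of `α` onto those of `τα`, so along a chain `α, τα, …, τᵏα` the iterates `τʲ i` (`j < k`) of
a simple root `i` of `α` stay in `Γ₁`; by nilpotency of `τ` they are distinct, so `k ≤ |Γ₁| < n`.
Applied to a cycle `τᵏα = α` run around `n + 1` times, the bound also shows that no pair occurs
at two levels.
-/

lemma tens_mul (A B C D : MatN n) : tens A B * tens C D = tens (A * C) (B * D) := by
  ext x y
  simp only [Matrix.mul_apply, tens, Fintype.sum_prod_type, Finset.sum_mul_sum]
  exact Finset.sum_congr rfl fun _ _ => Finset.sum_congr rfl fun _ _ => by ring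

lemma tens_zero_right (A : MatN n) : tens A (0 : MatN n) = 0 := by
  ext x y
  simp [tens]

lemma E_mul_E_of_ne {b c : ℕ} (h : b ≠ c) (a d : ℕ) : E n a b * E n c d = 0 := by
  ext x y
  rw [Matrix.mul_apply]
  refine Finset.sum_eq_zero fun z _ => ?_
  simp only [E]
  split_ifs <;> simp_all

/-- `e_β ⊗ e_{−α}` for `x = (α, β)`. -/
def rootTens (n : ℕ) (x : (ℕ × ℕ) × (ℕ × ℕ)) : MatT n :=
  tens (E n x.2.1 x.2.2) (E n x.1.2 x.1.1)

lemma smul_rootTens_mul_smul_rootTens {x y : (ℕ × ℕ) × (ℕ × ℕ)} (h : x.1.1 ≠ y.1.2) (a b : ℂ) :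
    (a • rootTens n x) * (b • rootTens n y) = 0 := by
  rw [smul_mul_smul_comm, rootTens, rootTens, tens_mul, E_mul_E_of_ne h, tens_zero_right,
    smul_zero]

lemma prod_map_one_add_of_pairwise {R : Type*} [Semiring R] {l : List R}
    (h : l.Pairwise fun a b => a * b = 0) : (l.map (1 + ·)).prod = 1 + l.sum := by
  induction l with
  | nil => simp
  | cons a t ih =>
    obtain ⟨ha, ht⟩ := List.pairwise_cons.mp h
    have hat : a * t.sum = 0 := by
      rw [← List.map_id t, ← List.sum_map_mul_left]
      exact List.sum_eq_zero (by simpa using ha)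
    rw [List.map_cons, List.prod_cons, ih ht, List.sum_cons, add_mul, one_mul, mul_add, mul_one,
      hat]
    abel

lemma prod_map_mul_prod_reverse_map {ι M : Type*} [Monoid M] {f g : ι → M} {l : List ι}
    (h : ∀ x ∈ l, f x * g x = 1) : (l.map f).prod * (l.reverse.map g).prod = 1 := by
  induction l with
  | nil => simp
  | cons a t ih =>
    simp only [List.map_cons, List.prod_cons, List.reverse_cons, List.map_append,
      List.prod_append]
    rw [mul_assoc, ← mul_assoc (t.map f).prod, ih fun x hx => h x (List.mem_cons_of_mem a hx),
      one_mul]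
    simpa using h a List.mem_cons_self

lemma card_le_of_forall_iterate_mem {α : Type*} [DecidableEq α] {f : α → α} {S : Finset α}
    (hS : ∀ x ∈ S, ∃ k ≥ 1, f^[k] x ∉ S) {x : α} {m : ℕ} (hx : ∀ j < m, f^[j] x ∈ S) :
    m ≤ S.card := by
  by_contra! hm
  have no_repeat : ∀ i j, i < j → j < m → f^[i] x ≠ f^[j] x := by
    intro i j hij hjm heq
    -- a repetition makes `f^[i] x` periodic, so its whole orbit stays in `S`
    have hper : Function.IsPeriodicPt f (j - i) (f^[i] x) := by
      rw [Function.IsPeriodicPt, Function.IsFixedPt, ← Function.iterate_add_apply,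
        Nat.sub_add_cancel hij.le, heq]
    obtain ⟨k, -, hk⟩ := hS _ (hx i (by omega))
    rw [← hper.iterate_mod_apply, ← Function.iterate_add_apply] at hk
    exact hk (hx _ (by have := Nat.mod_lt k (Nat.sub_pos_of_lt hij); omega))
  obtain ⟨i, hi, j, hj, hne, heq⟩ := Finset.exists_ne_map_eq_of_card_lt_of_maps_to
    (s := range m) (by simpa using hm) (f := fun j => f^[j] x)
    fun j hj => hx j (Finset.mem_range.mp hj)
  rw [Finset.mem_range] at hi hj
  rcases Nat.lt_or_gt_of_ne hne with h | h
  · exact no_repeat i j h hj heq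
  · exact no_repeat j i h hi heq.symm

lemma eq_of_rvec_eq {i j i' j' : ℕ} (hij : i ≠ j)
    (h : rvec i j = rvec i' j') : i = i' ∧ j = j' := by
  have hi := congrFun h i
  have hj := congrFun h j
  simp only [rvec, evec, Pi.sub_apply] at hi hj
  split_ifs at hi hj <;> revert hi hj <;> norm_num <;> omega

lemma sum_range_succ_evec (i t : ℕ) :
    ∑ s ∈ range (t + 1), evec i s = if i ≤ t then 1 else 0 := by
  simp [evec, Finset.sum_ite_eq']

lemma sum_range_succ_svec (i t : ℕ) :
    ∑ s ∈ range (t + 1), svec i s = if i = t then 1 else 0 := by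
  simp only [svec, rvec, Pi.sub_apply, Finset.sum_sub_distrib, sum_range_succ_evec]
  split_ifs <;> first | omega | norm_num

namespace tauStep

variable {T : BDTriple n} {p r : ℕ × ℕ}

/-- Prefix sums turn `Σ svec (τ k) = rvec r.1 r.2` into a count of the fibres of `τ`. -/
lemma card_filter_tau_eq (h : tauStep T p r) (t : ℕ) :
    #{k ∈ Ico p.1 p.2 | T.τ k = t} = if r.1 ≤ t ∧ t < r.2 then 1 else 0 := by
  have := congrArg (fun v => ∑ s ∈ range (t + 1), v s) h.2.2
  simp only [Finset.sum_apply] at this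
  rw [Finset.sum_comm] at this
  simp only [sum_range_succ_svec, Finset.sum_boole, rvec, Pi.sub_apply, Finset.sum_sub_distrib,
    sum_range_succ_evec] at this
  have hr := h.2.1
  rw [← Nat.cast_inj (R := ℂ), ← this]
  split_ifs <;> first | omega | norm_num

lemma tau_mem_Ico (h : tauStep T p r) {k : ℕ} (hk : k ∈ Ico p.1 p.2) : T.τ k ∈ Ico r.1 r.2 := by
  have hpos : 0 < #{k' ∈ Ico p.1 p.2 | T.τ k' = T.τ k} :=
    Finset.card_pos.mpr ⟨k, Finset.mem_filter.mpr ⟨hk, rfl⟩⟩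
  rw [h.card_filter_tau_eq] at hpos
  split_ifs at hpos with hmem
  · exact Finset.mem_Ico.mpr hmem
  · exact absurd hpos (lt_irrefl 0)

lemma exists_tau_eq (h : tauStep T p r) {t : ℕ} (ht : t ∈ Ico r.1 r.2) :
    ∃ k ∈ Ico p.1 p.2, T.τ k = t := by
  have hcard := h.card_filter_tau_eq t
  rw [if_pos (Finset.mem_Ico.mp ht)] at hcard
  obtain ⟨k, hk⟩ := Finset.card_pos.mp (hcard ▸ Nat.one_pos)
  exact ⟨k, (Finset.mem_filter.mp hk).1, (Finset.mem_filter.mp hk).2⟩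

lemma mem_Γ1 (h : tauStep T p r) {k : ℕ} (hk : k ∈ Ico p.1 p.2) : k ∈ T.Γ1 :=
  h.1.2 k (Finset.mem_Ico.mp hk).1 (Finset.mem_Ico.mp hk).2

lemma left_lt (h : tauStep T p r) : p.1 < p.2 ∧ p.2 < n := by
  have hp := h.1.1
  have := T.mem1 _ (h.mem_Γ1 (k := p.2 - 1) (Finset.mem_Ico.mpr ⟨by omega, by omega⟩))
  omega

lemma right_lt (h : tauStep T p r) : r.1 < r.2 ∧ r.2 < n := by
  have hr := h.2.1
  obtain ⟨k, hk, hτ⟩ := h.exists_tau_eq (t := r.2 - 1) (Finset.mem_Ico.mpr ⟨by omega, by omega⟩)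
  have := T.mem2 _ (T.bij.mapsTo (h.mem_Γ1 hk))
  omega

lemma right_unique (h : tauStep T p r) {r' : ℕ × ℕ} (h' : tauStep T p r') : r = r' := by
  obtain ⟨h1, h2⟩ := eq_of_rvec_eq h.2.1.ne (h.2.2.trans h'.2.2.symm)
  exact Prod.ext h1 h2

end tauStep

section precK

variable {T : BDTriple n}

lemma precK_add (a b : ℕ) {p q : ℕ × ℕ} :
    precK T (a + b) p q ↔ ∃ y, precK T a p y ∧ precK T b y q := by
  induction a generalizing p with
  | zero => simp [precK]
  | succ a ih =>
    rw [Nat.add_right_comm]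
    simp only [precK, ih]
    constructor
    · rintro ⟨r, hr, y, hry, hyq⟩
      exact ⟨y, ⟨r, hr, hry⟩, hyq⟩
    · rintro ⟨y, ⟨r, hr, hry⟩, hyq⟩
      exact ⟨r, hr, y, hry, hyq⟩

lemma precK.right_unique {k : ℕ} {p q q' : ℕ × ℕ} (h : precK T k p q) (h' : precK T k p q') :
    q = q' := by
  induction k generalizing p with
  | zero => exact h.symm.trans h'
  | succ k ih =>
    obtain ⟨r, hr, hrq⟩ := h
    obtain ⟨r', hr', hrq'⟩ := h'
    exact ih hrq (hr.right_unique hr' ▸ hrq')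

lemma precK.succ_bounds {k : ℕ} {p q : ℕ × ℕ} (h : precK T (k + 1) p q) :
    (p.1 < p.2 ∧ p.2 < n) ∧ (q.1 < q.2 ∧ q.2 < n) := by
  induction k generalizing p with
  | zero =>
    obtain ⟨r, hr, rfl⟩ := h
    exact ⟨hr.left_lt, hr.right_lt⟩
  | succ k ih =>
    obtain ⟨r, hr, hrq⟩ := h
    exact ⟨hr.left_lt, (ih hrq).2⟩

lemma precK.iterate_mem_Γ1 {k : ℕ} {p q : ℕ × ℕ} (h : precK T k p q) :
    ∀ j < k, ∀ t ∈ Ico p.1 p.2, T.τ^[j] t ∈ T.Γ1 := by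
  induction k generalizing p with
  | zero => exact fun j hj => absurd hj (Nat.not_lt_zero j)
  | succ k ih =>
    obtain ⟨r, hr, hrq⟩ := h
    rintro (_ | j) hj t ht
    · exact hr.mem_Γ1 ht
    · exact ih hrq j (by omega) _ (hr.tau_mem_Ico ht)

lemma BDTriple.card_Γ1_le (T : BDTriple n) : T.Γ1.card ≤ n - 1 :=
  calc T.Γ1.card ≤ (range (n - 1)).card :=
        Finset.card_le_card fun i hi => Finset.mem_range.mpr (by have := T.mem1 i hi; omega)
    _ = n - 1 := Finset.card_range _

/-- `Jmat` multiplies only the levels `1, …, n`; this shows that no pair lies beyond them. -/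
lemma precK.lt {k : ℕ} {p q : ℕ × ℕ} (h : precK T k p q) (hk : k ≠ 0) : k < n := by
  obtain ⟨k, rfl⟩ := Nat.exists_eq_succ_of_ne_zero hk
  have hp := h.succ_bounds.1
  have hk_le := card_le_of_forall_iterate_mem T.nilp
    fun j hj => h.iterate_mem_Γ1 j hj p.1 (Finset.mem_Ico.mpr ⟨le_rfl, hp.1⟩)
  have := T.card_Γ1_le
  omega

lemma precK.mul {k : ℕ} {p : ℕ × ℕ} (h : precK T k p p) (m : ℕ) : precK T (k * m) p p := by
  induction m with
  | zero => rfl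
  | succ m ih => exact (precK_add _ _).mpr ⟨p, ih, h⟩

lemma precK.eq_zero_of_self {k : ℕ} {p : ℕ × ℕ} (h : precK T k p p) : k = 0 := by
  by_contra hk
  have := (h.mul (n + 1)).lt (Nat.mul_ne_zero hk n.succ_ne_zero)
  have := Nat.le_mul_of_pos_left (n + 1) (Nat.pos_of_ne_zero hk)
  omega

lemma precK.level_eq {a b : ℕ} {p q : ℕ × ℕ} (ha : precK T a p q) (hb : precK T b p q) :
    a = b := by
  wlog hab : a ≤ b generalizing a b
  · exact (this hb ha (by omega)).symm
  obtain ⟨c, rfl⟩ := Nat.exists_eq_add_of_le hab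
  obtain ⟨y, hy, hyq⟩ := (precK_add a c).mp hb
  rw [hy.right_unique ha] at hyq
  rw [hyq.eq_zero_of_self, Nat.add_zero]

end precK

variable {T : BDTriple n}

def rootPairs (n : ℕ) : Finset ((ℕ × ℕ) × (ℕ × ℕ)) :=
  (range n ×ˢ range n) ×ˢ (range n ×ˢ range n)

lemma sumRoots_eq_sum (f : ℕ × ℕ → ℕ × ℕ → MatT n) :
    sumRoots n f = ∑ x ∈ rootPairs n, f x.1 x.2 := by
  simp only [sumRoots, rootPairs, Finset.sum_product]

/-- Sorted by the left end of `α`, so that `rootTens` of an earlier pair annihilates that of a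
later one. -/
def levelList (T : BDTriple n) (k : ℕ) : List ((ℕ × ℕ) × (ℕ × ℕ)) :=
  {x ∈ rootPairs n | precK T k x.1 x.2}.toList.mergeSort fun x y => x.1.1 ≤ y.1.1

lemma mem_levelList {k : ℕ} {x : (ℕ × ℕ) × (ℕ × ℕ)} :
    x ∈ levelList T (k + 1) ↔ precK T (k + 1) x.1 x.2 := by
  simp only [levelList, List.mem_mergeSort, Finset.mem_toList, Finset.mem_filter, rootPairs,
    Finset.mem_product, Finset.mem_range, and_iff_right_iff_imp]
  intro h
  have := h.succ_bounds
  omega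

lemma nodup_levelList (k : ℕ) : (levelList T k).Nodup :=
  (List.mergeSort_perm _ _).nodup_iff.mpr (Finset.nodup_toList _)

lemma pairwise_levelList (k : ℕ) : (levelList T k).Pairwise fun x y => x.1.1 ≤ y.1.1 := by
  simpa [levelList] using
    List.pairwise_mergeSort (le := fun x y : (ℕ × ℕ) × (ℕ × ℕ) => x.1.1 ≤ y.1.1)
      (by simp only [decide_eq_true_eq]; omega)
      (by simp only [Bool.or_eq_true, decide_eq_true_eq]; omega) _

lemma one_add_sumRoots_eq_prod (c : (ℕ × ℕ) × (ℕ × ℕ) → ℂ) (k : ℕ) :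
    1 + sumRoots n (fun p r => if precK T (k + 1) p r then c (p, r) • rootTens n (p, r) else 0)
      = ((levelList T (k + 1)).map fun x => 1 + c x • rootTens n x).prod := by
  have hann : ((levelList T (k + 1)).map fun x => c x • rootTens n x).Pairwise
      fun a b => a * b = 0 := by
    refine List.pairwise_map.mpr ((pairwise_levelList _).imp_of_mem fun _ hy hxy => ?_)
    have := (mem_levelList.mp hy).succ_bounds
    exact smul_rootTens_mul_smul_rootTens (by omega) _ _
  have hfactor : ((levelList T (k + 1)).map fun x => 1 + c x • rootTens n x)
      = ((levelList T (k + 1)).map fun x => c x • rootTens n x).map (1 + ·) := by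
    rw [List.map_map]
    rfl
  rw [hfactor, prod_map_one_add_of_pairwise hann, sumRoots_eq_sum, levelList,
    ((List.mergeSort_perm _ _).map _).sum_eq, Finset.sum_map_toList, Finset.sum_filter]

def orderedPairs (T : BDTriple n) : List ((ℕ × ℕ) × (ℕ × ℕ)) :=
  (List.range n).flatMap fun k => levelList T (k + 1)

lemma mem_orderedPairs {x : (ℕ × ℕ) × (ℕ × ℕ)} : x ∈ orderedPairs T ↔ prec T x.1 x.2 := by
  simp only [orderedPairs, List.mem_flatMap, List.mem_range, mem_levelList, prec]
  constructor
  · rintro ⟨k, -, hk⟩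
    exact ⟨k, hk⟩
  · rintro ⟨k, hk⟩
    exact ⟨k, Nat.lt_of_succ_lt (hk.lt k.succ_ne_zero), hk⟩

lemma nodup_orderedPairs : (orderedPairs T).Nodup :=
  List.nodup_flatMap.mpr ⟨fun k _ => nodup_levelList _, List.pairwise_lt_range.imp
    fun hab _ hx hy => absurd ((mem_levelList.mp hx).level_eq (mem_levelList.mp hy)) (by omega)⟩

lemma pairwise_orderedPairs : (orderedPairs T).Pairwise
    fun x y => ∀ a b, precK T a x.1 x.2 → precK T b y.1 y.2 → a ≤ b := by
  refine List.pairwise_flatMap.mpr ⟨fun k _ => ?_, List.pairwise_lt_range.imp ?_⟩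
  · refine List.pairwise_of_forall_mem_list fun x hx y hy a b ha hb => ?_
    rw [ha.level_eq (mem_levelList.mp hx), hb.level_eq (mem_levelList.mp hy)]
  · intro k l hkl x hx y hy a b ha hb
    rw [ha.level_eq (mem_levelList.mp hx), hb.level_eq (mem_levelList.mp hy)]
    omega

lemma orderedPairs_index_lt {a b i j : ℕ} (hi : i < (orderedPairs T).length)
    (hj : j < (orderedPairs T).length)
    (ha : precK T (a + 1) ((orderedPairs T).get ⟨i, hi⟩).1 ((orderedPairs T).get ⟨i, hi⟩).2)
    (hb : precK T (b + 1) ((orderedPairs T).get ⟨j, hj⟩).1 ((orderedPairs T).get ⟨j, hj⟩).2)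
    (hab : a < b) : i < j := by
  by_contra! hji
  rcases hji.lt_or_eq with hji | rfl
  · have := pairwise_orderedPairs.rel_get_of_lt (a := ⟨j, hj⟩) (b := ⟨i, hi⟩) hji _ _ hb ha
    omega
  · have := ha.level_eq hb
    omega

def jCoeff (q : ℝ) (T : BDTriple n) (x : (ℕ × ℕ) × (ℕ × ℕ)) : ℂ :=
  sgn T x.1 x.2 * ((q : ℂ) - (q : ℂ)⁻¹) * qpow q (Kc T x.1 x.2)

lemma Jlevel_succ_eq_prod (q : ℝ) (k : ℕ) :
    Jlevel q T (k + 1)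
      = ((levelList T (k + 1)).map fun x => 1 + jCoeff q T x • rootTens n x).prod := by
  rw [← one_add_sumRoots_eq_prod, Jlevel]
  simp only [jCoeff, rootTens, mul_comm (sgn T _ _)]

lemma Jmat_eq_prod (q : ℝ) :
    Jmat q T = ((orderedPairs T).map fun x => 1 + jCoeff q T x • rootTens n x).prod := by
  rw [Jmat, orderedPairs, List.map_flatMap, List.flatMap_def, List.prod_flatten, List.map_map]
  simp only [Function.comp_def, Jlevel_succ_eq_prod]

lemma Jmat_inv_eq_prod (q : ℝ) :
    (Jmat q T)⁻¹
      = ((orderedPairs T).reverse.map fun x => 1 - jCoeff q T x • rootTens n x).prod := by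
  refine Matrix.inv_eq_right_inv ?_
  rw [Jmat_eq_prod]
  refine prod_map_mul_prod_reverse_map fun x hx => ?_
  obtain ⟨k, hk⟩ := mem_orderedPairs.mp hx
  have := hk.succ_bounds
  rw [add_mul, one_mul, mul_sub, mul_one, smul_rootTens_mul_smul_rootTens (by omega)]
  abel

end

theorem stmt_16_general {n : ℕ} (q : ℝ) (T : BDTriple n) :
    ∃ L : List ((ℕ × ℕ) × (ℕ × ℕ)),
      L.Nodup ∧
      (∀ pq : (ℕ × ℕ) × (ℕ × ℕ), pq ∈ L ↔ prec T pq.1 pq.2) ∧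
      (∀ (a b ia ib : ℕ) (ha : ia < L.length) (hb : ib < L.length),
        precK T (a + 1) (L.get ⟨ia, ha⟩).1 (L.get ⟨ia, ha⟩).2 →
        precK T (b + 1) (L.get ⟨ib, hb⟩).1 (L.get ⟨ib, hb⟩).2 →
        a < b → ia < ib) ∧
      Jmat q T = (L.map fun pq =>
        (1 : MatT n) + (sgn T pq.1 pq.2 * ((q : ℂ) - (q : ℂ)⁻¹) * qpow q (Kc T pq.1 pq.2)) •
          tens (E n pq.2.1 pq.2.2) (E n pq.1.2 pq.1.1)).prod ∧
      (Jmat q T)⁻¹ = (L.reverse.map fun pq =>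
        (1 : MatT n) - (sgn T pq.1 pq.2 * ((q : ℂ) - (q : ℂ)⁻¹) * qpow q (Kc T pq.1 pq.2)) •
          tens (E n pq.2.1 pq.2.2) (E n pq.1.2 pq.1.1)).prod :=
  ⟨orderedPairs T, nodup_orderedPairs, fun _ => mem_orderedPairs,
    fun _ _ _ _ ha hb => orderedPairs_index_lt ha hb, Jmat_eq_prod q, Jmat_inv_eq_prod q⟩

/-- product formulas for `J` and `J⁻¹` over a suitable total ordering of
`X = {(α,β) : α ≺ β}` refining the grading by the power of `τ` (the order is encoded by
the enumeration `L` of `X`; `Π^>` is the product over the reversed list). -/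
theorem stmt_16 {n : ℕ} (hn : 2 ≤ n) (q : ℝ) (hq : 0 < q) (hq1 : q ≠ 1)
    (T : BDTriple n) :
    ∃ L : List ((ℕ × ℕ) × (ℕ × ℕ)),
      L.Nodup ∧
      (∀ pq : (ℕ × ℕ) × (ℕ × ℕ), pq ∈ L ↔ prec T pq.1 pq.2) ∧
      (∀ (a b ia ib : ℕ) (ha : ia < L.length) (hb : ib < L.length),
        precK T (a + 1) (L.get ⟨ia, ha⟩).1 (L.get ⟨ia, ha⟩).2 →
        precK T (b + 1) (L.get ⟨ib, hb⟩).1 (L.get ⟨ib, hb⟩).2 →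
        a < b → ia < ib) ∧
      Jmat q T = (L.map fun pq =>
        (1 : MatT n) + (sgn T pq.1 pq.2 * ((q : ℂ) - (q : ℂ)⁻¹) * qpow q (Kc T pq.1 pq.2)) •
          tens (E n pq.2.1 pq.2.2) (E n pq.1.2 pq.1.1)).prod ∧
      (Jmat q T)⁻¹ = (L.reverse.map fun pq =>
        (1 : MatT n) - (sgn T pq.1 pq.2 * ((q : ℂ) - (q : ℂ)⁻¹) * qpow q (Kc T pq.1 pq.2)) •
          tens (E n pq.2.1 pq.2.2) (E n pq.1.2 pq.1.1)).prod :=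
  stmt_16_general q T

end GGS
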